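/- For every finite alphabet A with |A| ≥ 2, every positive integer m, and every valid index code of length ℓ with locality 1 for the three-receiver unicast problem B* (i.e., B*_S with S = {1,…,12}), one has ℓ ≥ 7m. -/

import Mathlib

/-- The want sets `W₁, W₂, W₃` of the three receivers. -/
def Wset : Fin 3 → Finset ℕ
  | 0 => {1, 2, 3, 4}
  | 1 => {5, 6, 7, 8}
  | 2 => {9, 10, 11, 12}

/-- The side information sets `K₁, K₂, K₃` of the three receivers. -/
def Kset : Fin 3 → Finset ℕ
  | 0 => {5, 6, 9, 10}
  | 1 => {1, 2, 9, 11}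
  | 2 => {1, 3, 5, 7}

/-- Directed edge relation of the side information graph `G*` on `{1, …, 12}`:
`(a, b)` is an edge iff `a ∈ Wᵢ` and `b ∈ Kᵢ` for the (unique) `i` with `a ∈ Wᵢ`. -/
def Gedge (a b : ℕ) : Prop := ∃ i : Fin 3, a ∈ Wset i ∧ b ∈ Kset i

/-- The underlying undirected side information graph `G*ᵤ`: distinct `a, b` are adjacent iff
both `(a, b)` and `(b, a)` are directed edges of `G*`. -/
def Gu : SimpleGraph ℕ where
  Adj a b := a ≠ b ∧ Gedge a b ∧ Gedge b a
  symm := by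
    refine ⟨fun a b h => ?_⟩
    exact ⟨h.1.symm, h.2.2, h.2.1⟩
  loopless := by
    refine ⟨fun a => ?_⟩
    intro h
    exact h.1 rfl

/-- A directed cycle (of length `k + 2 ≥ 2`) with all its vertices in the finite set `S`,
in the directed graph with edge relation `E`: a sequence of distinct vertices
`v 0, v 1, …` with a directed edge from each vertex to the (cyclically) next one. -/
def HasDirCycleIn (E : ℕ → ℕ → Prop) (S : Finset ℕ) : Prop :=
  ∃ k : ℕ, ∃ v : Fin (k + 2) → ℕ,
    Function.Injective v ∧ (∀ i, v i ∈ S) ∧ ∀ i, E (v i) (v (i + 1))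

/-- `MAIS` of the subgraph induced by `S` of the directed graph with edge relation `E`:
the maximum cardinality of a subset `T ⊆ S` whose induced subgraph contains no directed
cycle. -/
noncomputable def maisOn (E : ℕ → ℕ → Prop) (S : Finset ℕ) : ℕ :=
  sSup {n : ℕ | ∃ T : Finset ℕ, T ⊆ S ∧ T.card = n ∧ ¬ HasDirCycleIn E T}

/-- The independence number of the subgraph of `G` induced by the finite vertex set `S`:
the maximum cardinality of a set `T ⊆ S` of pairwise non-adjacent vertices. -/
noncomputable def alphaOn (G : SimpleGraph ℕ) (S : Finset ℕ) : ℕ :=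
  sSup {n : ℕ | ∃ T : Finset ℕ, T ⊆ S ∧ T.card = n ∧ ∀ a ∈ T, ∀ b ∈ T, ¬ G.Adj a b}

/-- A valid index code of length `ℓ` with locality `1` and message length `m`, over the
alphabet `A`, for the three-receiver unicast problem `B*_S` determined by the message subset
`S ⊆ {1, …, 12}`.  The messages are `x j ∈ A ^ m` for `j ∈ S`.  It consists of an encoder
`enc`, and for each receiver `i ∈ {1, 2, 3}` a set `R i` of at most `m * |Wᵢ ∩ S|` codeword
coordinates together with a decoder `dec i` which recovers the demanded messages
`(x j : j ∈ Wᵢ ∩ S)` from the observed codeword symbols `(enc x k : k ∈ R i)` and the side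
information `(x j : j ∈ Kᵢ ∩ S)`. -/
structure ValidIndexCode (A : Type*) [Fintype A] (m ℓ : ℕ) (S : Finset ℕ) where
  enc : ({j : ℕ // j ∈ S} → Fin m → A) → Fin ℓ → A
  R : Fin 3 → Finset (Fin ℓ)
  locality : ∀ i : Fin 3, (R i).card ≤ m * (Wset i ∩ S).card
  dec : ∀ i : Fin 3, ({k : Fin ℓ // k ∈ R i} → A) →
    ({j : ℕ // j ∈ Kset i ∩ S} → Fin m → A) → ({j : ℕ // j ∈ Wset i ∩ S} → Fin m → A)
  correct : ∀ (x : {j : ℕ // j ∈ S} → Fin m → A) (i : Fin 3)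
      (j : {j : ℕ // j ∈ Wset i ∩ S}),
    dec i (fun k => enc x k.1) (fun j' => x ⟨j'.1, (Finset.mem_inter.mp j'.2).2⟩) j =
      x ⟨j.1, (Finset.mem_inter.mp j.2).2⟩

/-!
The seven messages of `T = {1, 2, 3, 4, 7, 8, 12}` induce an acyclic subgraph of `G*`: once
the other messages are fixed, receiver 1 decodes `x₁, …, x₄` (its side information lies outside
`T`), then receiver 2 decodes `x₇, x₈` (its side information in `T` is among `x₁, …, x₄`), then
receiver 3 decodes `x₁₂`. Hence the codeword determines the `7m` symbols of `(xⱼ)_{j ∈ T}`, and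
`|A| ^ (7m) ≤ |A| ^ ℓ`.
-/

open Finset

namespace ValidIndexCode

variable {A : Type*} [Fintype A] {m ℓ : ℕ} {S : Finset ℕ}

def AgreeOn (x x' : {j : ℕ // j ∈ S} → Fin m → A) (D : Finset ℕ) : Prop :=
  ∀ j : {j : ℕ // j ∈ S}, j.1 ∈ D → x j = x' j

def extendConst (a₀ : A) (T : Finset ℕ) (y : {j : ℕ // j ∈ T} → Fin m → A) :
    {j : ℕ // j ∈ S} → Fin m → A :=
  fun j => if h : j.1 ∈ T then y ⟨j.1, h⟩ else fun _ => a₀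

section

variable (code : ValidIndexCode A m ℓ S)

theorem agreeOn_union_want {x x' : {j : ℕ // j ∈ S} → Fin m → A}
    (henc : code.enc x = code.enc x') {D : Finset ℕ} (hx : AgreeOn x x' D) (i : Fin 3)
    (hK : Kset i ⊆ D) : AgreeOn x x' (D ∪ Wset i) := by
  intro j hj
  rcases mem_union.mp hj with hjD | hjW
  · exact hx j hjD
  have hside : (fun j' : {j : ℕ // j ∈ Kset i ∩ S} => x ⟨j'.1, (mem_inter.mp j'.2).2⟩) =
      fun j' => x' ⟨j'.1, (mem_inter.mp j'.2).2⟩ :=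
    funext fun j' => hx _ (hK (mem_inter.mp j'.2).1)
  have hwant := code.correct x i ⟨j.1, mem_inter.mpr ⟨hjW, j.2⟩⟩
  rw [henc, hside, code.correct x' i] at hwant
  exact hwant.symm

theorem mul_card_le_length (hA : 2 ≤ Fintype.card A) {T : Finset ℕ} (hTS : T ⊆ S)
    (hdet : ∀ x x', code.enc x = code.enc x' → AgreeOn x x' (S \ T) → x = x') :
    m * T.card ≤ ℓ := by
  obtain ⟨a₀⟩ : Nonempty A := Fintype.card_pos_iff.mp (by omega)
  have hinj : Function.Injective fun y => code.enc (extendConst a₀ T y : {j // j ∈ S} → _) := by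
    intro y y' hy
    have hext := hdet _ _ hy fun j hj => by
      simp only [extendConst, dif_neg (mem_sdiff.mp hj).2]
    funext t
    simpa only [extendConst, dif_pos t.2] using congrFun hext ⟨t.1, hTS t.2⟩
  have hcard := Fintype.card_le_of_injective _ hinj
  simp only [Fintype.card_fun, Fintype.card_fin, Fintype.card_coe, ← pow_mul] at hcard
  exact (Nat.pow_le_pow_iff_right (by omega : 1 < Fintype.card A)).mp hcard

end

theorem eq_of_agreeOn_sdiff_acyclic (code : ValidIndexCode A m ℓ (Icc 1 12))
    {x x' : {j : ℕ // j ∈ Icc 1 12} → Fin m → A} (henc : code.enc x = code.enc x')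
    (hx : AgreeOn x x' (Icc 1 12 \ {1, 2, 3, 4, 7, 8, 12})) : x = x' := by
  have h₁ := code.agreeOn_union_want henc hx 0 (by decide)
  have h₂ := code.agreeOn_union_want henc h₁ 1 (by decide)
  have h₃ := code.agreeOn_union_want henc h₂ 2 (by decide)
  exact funext fun j => h₃ j (by revert j; decide)

end ValidIndexCode

theorem length_lower_bound_for_Bstar_general
    (A : Type*) [Fintype A] (hA : 2 ≤ Fintype.card A)
    (m : ℕ) (ℓ : ℕ) (code : ValidIndexCode A m ℓ (Finset.Icc 1 12)) :
    7 * m ≤ ℓ := by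
  have h := code.mul_card_le_length hA (T := {1, 2, 3, 4, 7, 8, 12}) (by decide)
    fun _ _ henc hx => code.eq_of_agreeOn_sdiff_acyclic henc hx
  rwa [mul_comm] at h

/-- Every valid index code of length `ℓ` with locality `1` for the three-receiver unicast
problem `B*` (i.e. `B*_S` with `S = {1, …, 12}`) over an alphabet of size at least `2`
satisfies `ℓ ≥ 7 m`. -/
theorem length_lower_bound_for_Bstar
    (A : Type*) [Fintype A] (hA : 2 ≤ Fintype.card A)
    (m : ℕ) (hm : 0 < m) (ℓ : ℕ) (code : ValidIndexCode A m ℓ (Finset.Icc 1 12)) :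
    7 * m ≤ ℓ :=
  length_lower_bound_for_Bstar_general A hA m ℓ code
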